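/- For the following three classes of locally compact groups, class (a) equals class (c), assuming (as established separately) that connected [IN]-groups are amenable and that totally disconnected [IN]-groups admit open compact normal subgroups: (a) groups G admitting a closed normal amenable subgroup N with G/N an [IN]-group; (c) groups admitting an open normal amenable subgroup. In particular, (c) ⊆ (a) trivially, and (a) ⊆ (c). -/

import Mathlib

/-!
Given `N` with `G ⧸ N` an [IN]-group, let `C` be the identity component of `G ⧸ N` and `N₂` its
preimage in `G`. As a closed subgroup of an [IN]-group, `C` is a connected [IN]-group, hence
amenable, so `N₂` is amenable by (iii). The quotient `G ⧸ N₂` is an open image of `G ⧸ N`, hence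
[IN], and it is totally disconnected, so it has an open compact normal subgroup `K`. Compact
groups are amenable (Haar measure), so the preimage of `K` in `G` is open, normal and amenable.
Conversely, if `N` is open then `G ⧸ N` is discrete, hence [IN].
-/

open scoped Topology

/-- A topological group is amenable if there is a left-invariant mean on the
bounded continuous real-valued functions. -/
def IsAmenable (G : Type*) [Group G] [TopologicalSpace G] [IsTopologicalGroup G] : Prop :=
  ∃ m : BoundedContinuousFunction G ℝ →ₗ[ℝ] ℝ,
    (∀ f : BoundedContinuousFunction G ℝ, 0 ≤ f → 0 ≤ m f) ∧ m 1 = 1 ∧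
    ∀ (g : G) (f : BoundedContinuousFunction G ℝ),
      m (f.compContinuous ⟨fun x => g * x, by continuity⟩) = m f

/-- A topological group is an [IN]-group if some relatively compact neighbourhood
of the identity is invariant under all inner automorphisms. -/
def IsINGroup (G : Type*) [Group G] [TopologicalSpace G] : Prop :=
  ∃ W ∈ 𝓝 (1 : G), IsCompact (closure W) ∧ ∀ x : G, (fun g => x * g * x⁻¹) '' W = W

open MeasureTheory in
theorem isAmenable_of_compactSpace (K : Type*) [Group K] [TopologicalSpace K]
    [IsTopologicalGroup K] [CompactSpace K] [T2Space K] : IsAmenable K := by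
  borelize K
  let μ : Measure K := Measure.haarMeasure ⊤
  have : IsProbabilityMeasure μ := ⟨Measure.haarMeasure_self (K₀ := ⊤)⟩
  refine ⟨{ toFun := fun f => ∫ x, f x ∂μ
            map_add' := fun f g => integral_add (f.integrable μ) (g.integrable μ)
            map_smul' := fun c f => integral_smul c (fun x => f x) }, ?_, ?_, ?_⟩
  · exact fun f hf => integral_nonneg fun x => hf x
  · simp
  · exact fun g f => integral_mul_left_eq_self (fun x => f x) g

instance Subgroup.normal_connectedComponentOfOne (G : Type*) [Group G] [TopologicalSpace G]
    [IsTopologicalGroup G] : (Subgroup.connectedComponentOfOne G).Normal where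
  conj_mem n hn g := by
    have := (IsTopologicalGroup.continuous_conj g).image_connectedComponent_subset 1 ⟨n, hn, rfl⟩
    exact (by simpa using this : g * n * g⁻¹ ∈ connectedComponent (1 : G))

open scoped Pointwise in
theorem connectedComponent_eq_iff_inv_mul_mem {G : Type*} [Group G] [TopologicalSpace G]
    [IsTopologicalGroup G] (a b : G) :
    connectedComponent a = connectedComponent b ↔ a⁻¹ * b ∈ connectedComponent (1 : G) := by
  have ha : connectedComponent a = a • connectedComponent (1 : G) := by
    rw [smul_connectedComponent, mul_one]
  rw [eq_comm, connectedComponent_eq_iff_mem, ha, Set.mem_smul_set_iff_inv_smul_mem, smul_eq_mul]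

theorem totallyDisconnectedSpace_quotient_comap_connectedComponentOfOne {G Q : Type*} [Group G]
    [TopologicalSpace G] [IsTopologicalGroup G] [Group Q] [TopologicalSpace Q]
    [IsTopologicalGroup Q] (π : G →* Q) (hπ : Continuous π) :
    TotallyDisconnectedSpace (G ⧸ (Subgroup.connectedComponentOfOne Q).comap π) := by
  set C := (Subgroup.connectedComponentOfOne Q).comap π
  have hrel (g g' : G) : QuotientGroup.leftRel C g g' ↔
      ConnectedComponents.mk (π g) = ConnectedComponents.mk (π g') := by
    rw [QuotientGroup.leftRel_apply, ConnectedComponents.coe_eq_coe,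
      connectedComponent_eq_iff_inv_mul_mem, ← map_inv, ← map_mul]
    rfl
  let f : G ⧸ C → ConnectedComponents Q :=
    Quotient.lift (fun g => ConnectedComponents.mk (π g)) fun g g' h => (hrel g g').1 h
  have hf : Continuous f :=
    (QuotientGroup.isQuotientMap_mk C).continuous_iff.2 (ConnectedComponents.continuous_coe.comp hπ)
  have hf_inj : Function.Injective f := by
    rintro ⟨g⟩ ⟨g'⟩ h
    exact Quotient.sound ((hrel g g').2 h)
  exact ⟨isTotallyDisconnected_of_image hf.continuousOn hf_inj
    (isTotallyDisconnected_of_totallyDisconnectedSpace _)⟩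

theorem conj_mem_iff_of_forall_conj_image_eq {G : Type*} [Group G] {W : Set G}
    (hW : ∀ x : G, (fun g => x * g * x⁻¹) '' W = W) (x g : G) : x * g * x⁻¹ ∈ W ↔ g ∈ W := by
  conv_lhs => rw [← hW x]
  exact (MulAut.conj x).injective.mem_set_image

theorem QuotientGroup.isOpenQuotientMap_map_id {G : Type*} [Group G] [TopologicalSpace G]
    [IsTopologicalGroup G] {N M : Subgroup G} [N.Normal] [M.Normal] (h : N ≤ M) :
    IsOpenQuotientMap (QuotientGroup.map N M (MonoidHom.id G) h) :=
  (QuotientGroup.isOpenQuotientMap_mk (N := N)).of_comp_iff.1 QuotientGroup.isOpenQuotientMap_mk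

namespace IsINGroup

variable {G : Type*} [Group G] [TopologicalSpace G]

theorem subgroup (hG : IsINGroup G) {H : Subgroup G} (hH : IsClosed (H : Set G)) :
    IsINGroup H := by
  obtain ⟨W, hW, hWc, hWconj⟩ := hG
  refine ⟨Subtype.val ⁻¹' W, continuous_subtype_val.continuousAt.preimage_mem_nhds hW,
    ?_, fun x => ?_⟩
  · exact (hH.isClosedEmbedding_subtypeVal.isCompact_preimage hWc).of_isClosed_subset
      isClosed_closure (closure_minimal (Set.preimage_mono subset_closure)
        (isClosed_closure.preimage continuous_subtype_val))
  · rw [Set.image_eq_preimage_of_inverse (f := fun g => x * g * x⁻¹) (g := fun g => x⁻¹ * g * x)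
      (fun g => by group) (fun g => by group)]
    ext y
    simpa using conj_mem_iff_of_forall_conj_image_eq hWconj x⁻¹ y

theorem of_discreteTopology [DiscreteTopology G] : IsINGroup G :=
  ⟨{1}, by simp, by simp, by simp⟩

theorem of_isOpenQuotientMap [IsTopologicalGroup G] {H : Type*} [Group H] [TopologicalSpace H]
    [IsTopologicalGroup H] (hG : IsINGroup G) (φ : G →* H) (hφ : IsOpenQuotientMap φ) :
    IsINGroup H := by
  obtain ⟨W, hW, hWc, hWconj⟩ := hG
  refine ⟨φ '' W, map_one φ ▸ hφ.isOpenMap.image_mem_nhds hW,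
    (hWc.image hφ.continuous).closure_of_subset (Set.image_mono subset_closure), fun y => ?_⟩
  obtain ⟨x, rfl⟩ := hφ.surjective y
  conv_rhs => rw [← hWconj x]
  simp only [Set.image_image, map_mul, map_inv]

theorem of_quotient_of_le [IsTopologicalGroup G] {N M : Subgroup G} [N.Normal] [M.Normal]
    (hG : IsINGroup (G ⧸ N)) (h : N ≤ M) : IsINGroup (G ⧸ M) :=
  hG.of_isOpenQuotientMap _ (QuotientGroup.isOpenQuotientMap_map_id h)

end IsINGroup

theorem stmt7 {G : Type u} [Group G] [TopologicalSpace G] [IsTopologicalGroup G]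
    [LocallyCompactSpace G]
    -- (i) connected [IN]-groups are amenable
    (h1 : ∀ (H : Type u) [Group H] [TopologicalSpace H] [IsTopologicalGroup H]
      [LocallyCompactSpace H] [ConnectedSpace H], IsINGroup H → IsAmenable H)
    -- (ii) totally disconnected [IN]-groups admit open compact normal subgroups
    (h2 : ∀ (H : Type u) [Group H] [TopologicalSpace H] [IsTopologicalGroup H]
      [LocallyCompactSpace H] [TotallyDisconnectedSpace H], IsINGroup H →
      ∃ N : Subgroup H, N.Normal ∧ IsOpen (N : Set H) ∧ IsCompact (N : Set H))
    -- (iii) the preimage under a quotient map (with amenable kernel) of an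
    -- amenable subgroup of the quotient is amenable
    (h3 : ∀ (N : Subgroup G) (_ : N.Normal), IsAmenable N →
      ∀ M : Subgroup (G ⧸ N), IsAmenable M →
        IsAmenable (M.comap (QuotientGroup.mk' N))) :
    (∃ (N : Subgroup G) (_ : N.Normal), IsClosed (N : Set G) ∧ IsAmenable N ∧
        IsINGroup (G ⧸ N)) ↔
      ∃ N : Subgroup G, N.Normal ∧ IsOpen (N : Set G) ∧ IsAmenable N := by
  constructor
  · rintro ⟨N, hN, -, hNam, hQ⟩
    set C := Subgroup.connectedComponentOfOne (G ⧸ N)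
    have hCclosed : IsClosed (C : Set (G ⧸ N)) := isClosed_connectedComponent
    have : LocallyCompactSpace C := hCclosed.isClosedEmbedding_subtypeVal.locallyCompactSpace
    have : ConnectedSpace C := isConnected_iff_connectedSpace.mp isConnected_connectedComponent
    have hCam : IsAmenable C := h1 C (hQ.subgroup hCclosed)
    set N₂ := C.comap (QuotientGroup.mk' N)
    -- makes `G ⧸ N₂` Hausdorff, as the Haar measure on `K` requires
    have : IsClosed (N₂ : Set G) := hCclosed.preimage QuotientGroup.continuous_mk
    have := totallyDisconnectedSpace_quotient_comap_connectedComponentOfOne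
      (QuotientGroup.mk' N) QuotientGroup.continuous_mk
    have hNN₂ : N ≤ N₂ := QuotientGroup.ker_mk' N ▸ (QuotientGroup.mk' N).ker_le_comap C
    obtain ⟨K, hK, hKopen, hKcompact⟩ := h2 (G ⧸ N₂) (hQ.of_quotient_of_le hNN₂)
    have : CompactSpace K := isCompact_iff_compactSpace.mp hKcompact
    exact ⟨K.comap (QuotientGroup.mk' N₂), inferInstance,
      hKopen.preimage QuotientGroup.continuous_mk,
      h3 N₂ inferInstance (h3 N hN hNam C hCam) K (isAmenable_of_compactSpace K)⟩
  · rintro ⟨N, hN, hNopen, hNam⟩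
    have := QuotientGroup.discreteTopology hNopen
    exact ⟨N, hN, N.isClosed_of_isOpen hNopen, hNam, .of_discreteTopology⟩
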